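/- arXiv:1311.6250 — 2 statements merged into one kernel-verified Lean document; each statement's English description precedes it below -/
import Mathlib

section
/- TPTL¹ is strictly more expressive than MTL over data words: every MTL formula is equivalent to a TPTL formula using one register variable, but some TPTL¹ formula (for instance x.F F F (x = 0)) is not equivalent to any MTL formula. -/
/-- Integers extended with `-∞` (`⊥`) and `+∞` (`⊤`), used as interval endpoints. -/
abbrev EIntv := WithBot (WithTop ℤ)

def EIntv.ofInt (n : ℤ) : EIntv := ((n : WithTop ℤ) : EIntv)

/-- An interval of integers, given by two (possibly infinite) endpoints and
openness flags. -/
structure Iv where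
  lo : EIntv
  hi : EIntv
  loOpen : Bool
  hiOpen : Bool

/-- Membership of an integer in an interval. -/
def Iv.mem (I : Iv) (d : ℤ) : Prop :=
  (if I.loOpen then I.lo < EIntv.ofInt d else I.lo ≤ EIntv.ofInt d) ∧
  (if I.hiOpen then EIntv.ofInt d < I.hi else EIntv.ofInt d ≤ I.hi)

/-- The interval `(-∞, +∞)`. -/
def Iv.univ : Iv := ⟨⊥, ⊤, true, true⟩

/-- The singleton interval `[n, n]`. -/
def Iv.pt (n : ℤ) : Iv := ⟨EIntv.ofInt n, EIntv.ofInt n, false, false⟩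

/-- A data word: an infinite sequence of pairs of a set of propositions and a
natural number data value. -/
abbrev DataWord (P : Type) := ℕ → (Set P) × ℕ

/-- Syntax of MTL: atoms, negation, conjunction, and interval-constrained
strict until. -/
inductive MTL (P : Type) where
  | atom : P → MTL P
  | neg  : MTL P → MTL P
  | and  : MTL P → MTL P → MTL P
  | untl : MTL P → Iv → MTL P → MTL P

/-- Satisfaction of an MTL formula at position `i` of data word `w`. -/
def MTL.sat {P : Type} (w : DataWord P) : ℕ → MTL P → Prop
  | i, .atom p => p ∈ (w i).1
  | i, .neg φ => ¬ MTL.sat w i φ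
  | i, .and φ ψ => MTL.sat w i φ ∧ MTL.sat w i ψ
  | i, .untl φ I ψ => ∃ j, i < j ∧ MTL.sat w j ψ ∧
      I.mem (((w j).2 : ℤ) - ((w i).2 : ℤ)) ∧
      ∀ k, i < k → k < j → MTL.sat w k φ

/-- A data word satisfies an MTL formula if it holds at position `0`. -/
def MTL.models {P : Type} (w : DataWord P) (φ : MTL P) : Prop := MTL.sat w 0 φ

/-- The until rank of an MTL formula. -/
def MTL.urk {P : Type} : MTL P → ℕ
  | .atom _ => 0
  | .neg φ => φ.urk
  | .and φ ψ => max φ.urk ψ.urk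
  | .untl φ _ ψ => max φ.urk ψ.urk + 1

/-- All interval endpoints of until operators in the formula lie in `S`. -/
def MTL.endpointsIn {P : Type} : MTL P → Set EIntv → Prop
  | .atom _, _ => True
  | .neg φ, S => φ.endpointsIn S
  | .and φ ψ, S => φ.endpointsIn S ∧ ψ.endpointsIn S
  | .untl φ I ψ, S => I.lo ∈ S ∧ I.hi ∈ S ∧ φ.endpointsIn S ∧ ψ.endpointsIn S

/-- Syntax of TPTL: atoms, register constraints, negation, conjunction,
strict until, and the freeze quantifier. -/
inductive TPTL (P V : Type) where
  | atom : P → TPTL P V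
  | cstr : V → Iv → TPTL P V
  | neg : TPTL P V → TPTL P V
  | and : TPTL P V → TPTL P V → TPTL P V
  | untl : TPTL P V → TPTL P V → TPTL P V
  | freeze : V → TPTL P V → TPTL P V

/-- Satisfaction of a TPTL formula at position `i` of data word `w` under the
register valuation `ν`. -/
def TPTL.sat {P V : Type} [DecidableEq V] (w : DataWord P) :
    ℕ → (V → ℕ) → TPTL P V → Prop
  | i, _, .atom p => p ∈ (w i).1
  | i, ν, .cstr x I => I.mem (((w i).2 : ℤ) - (ν x : ℤ))
  | i, ν, .neg φ => ¬ TPTL.sat w i ν φ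
  | i, ν, .and φ ψ => TPTL.sat w i ν φ ∧ TPTL.sat w i ν ψ
  | i, ν, .untl φ ψ => ∃ j, i < j ∧ TPTL.sat w j ν ψ ∧
      ∀ k, i < k → k < j → TPTL.sat w k ν φ
  | i, ν, .freeze x φ => TPTL.sat w i (Function.update ν x (w i).2) φ

/-- A data word satisfies a TPTL formula if it holds at position `0` under the
valuation mapping every register to the first data value. -/
def TPTL.models {P V : Type} [DecidableEq V] (w : DataWord P) (φ : TPTL P V) : Prop :=
  TPTL.sat w 0 (fun _ => (w 0).2) φ

/-- The until rank of a TPTL formula. -/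
def TPTL.urk {P V : Type} : TPTL P V → ℕ
  | .atom _ => 0
  | .cstr _ _ => 0
  | .neg φ => φ.urk
  | .and φ ψ => max φ.urk ψ.urk
  | .untl φ ψ => max φ.urk ψ.urk + 1
  | .freeze _ φ => φ.urk

/-- All register constraints in the formula are equality tests `x ∈ [0,0]`. -/
def TPTL.eqOnly {P V : Type} : TPTL P V → Prop
  | .atom _ => True
  | .cstr _ I => I = Iv.pt 0
  | .neg φ => φ.eqOnly
  | .and φ ψ => φ.eqOnly ∧ ψ.eqOnly
  | .untl φ ψ => φ.eqOnly ∧ ψ.eqOnly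
  | .freeze _ φ => φ.eqOnly

/-- All endpoints of intervals in register constraints lie in `S`. -/
def TPTL.cstrIn {P V : Type} : TPTL P V → Set EIntv → Prop
  | .atom _, _ => True
  | .cstr _ I, S => I.lo ∈ S ∧ I.hi ∈ S
  | .neg φ, S => φ.cstrIn S
  | .and φ ψ, S => φ.cstrIn S ∧ ψ.cstrIn S
  | .untl φ ψ, S => φ.cstrIn S ∧ ψ.cstrIn S
  | .freeze _ φ, S => φ.cstrIn S

/-!
MTL embeds into TPTL¹ by freezing the register at each until and checking the interval
constraint at the witness position.

For the converse, let `H` exceed every interval endpoint of an MTL formula `φ` and consider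
the data words `3H, H, 2H, 3H, 4H, …` and `3H, H, 3H, 4H, 5H, …`. Between any two positions
`1 ≤ i < j` of either word the data grows by at least `H`, so every until subformula of `φ`
evaluated at a position `≥ 1` is decided by its successor position, and `φ` has one and the
same truth value at all positions `≥ 1` of both words. At position `0` the words differ only
in that the first one also offers the difference `-H` (at position `2`), which no interval of
`φ` separates from the difference `-2H` that both words offer at position `1`. Hence `φ`
cannot separate the words, while `x.F F F (x = 0)` holds on the first (at position `3`) and
fails on the second.
-/

namespace EIntv

/-- The absolute value of a finite endpoint; `0` at `±∞`. -/
def natAbs (e : EIntv) : ℕ := (WithTop.untopD 0 (WithBot.unbotD 0 e)).natAbs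

lemma sameSide_of_far {e : EIntv} {M : ℕ} (he : e.natAbs ≤ M) {a b : ℤ}
    (hab : ((M : ℤ) < a ∧ (M : ℤ) < b) ∨ (a < -M ∧ b < -M)) :
    (e < ofInt a ∧ e < ofInt b) ∨ (ofInt a < e ∧ ofInt b < e) := by
  induction e using WithBot.recBotCoe with
  | bot => exact .inl ⟨WithBot.bot_lt_coe _, WithBot.bot_lt_coe _⟩
  | coe t =>
    induction t using WithTop.recTopCoe with
    | top =>
      exact .inr ⟨WithBot.coe_lt_coe.2 (WithTop.coe_lt_top _),
        WithBot.coe_lt_coe.2 (WithTop.coe_lt_top _)⟩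
    | coe m =>
      change m.natAbs ≤ M at he
      simp only [ofInt, WithBot.coe_lt_coe, WithTop.coe_lt_coe]
      omega

end EIntv

namespace Iv

lemma mem_iff_of_sameSide {I : Iv} {a b : ℤ}
    (hlo : (I.lo < .ofInt a ∧ I.lo < .ofInt b) ∨ (.ofInt a < I.lo ∧ .ofInt b < I.lo))
    (hhi : (I.hi < .ofInt a ∧ I.hi < .ofInt b) ∨ (.ofInt a < I.hi ∧ .ofInt b < I.hi)) :
    I.mem a ↔ I.mem b := by
  unfold Iv.mem
  rcases hlo with ⟨hla, hlb⟩ | ⟨hla, hlb⟩ <;> rcases hhi with ⟨hha, hhb⟩ | ⟨hha, hhb⟩ <;>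
    cases I.loOpen <;> cases I.hiOpen <;>
    simp [hla, hlb, hha, hhb, hla.le, hlb.le, hha.le, hhb.le, hla.not_gt, hlb.not_gt,
      hha.not_gt, hhb.not_gt, hla.not_ge, hlb.not_ge, hha.not_ge, hhb.not_ge]

lemma mem_iff_of_far {I : Iv} {M : ℕ} (hlo : I.lo.natAbs ≤ M) (hhi : I.hi.natAbs ≤ M)
    {a b : ℤ} (hab : ((M : ℤ) < a ∧ (M : ℤ) < b) ∨ (a < -M ∧ b < -M)) :
    I.mem a ↔ I.mem b :=
  mem_iff_of_sameSide (EIntv.sameSide_of_far hlo hab) (EIntv.sameSide_of_far hhi hab)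

lemma mem_univ (d : ℤ) : Iv.univ.mem d :=
  ⟨WithBot.bot_lt_coe _, WithBot.coe_lt_coe.2 (WithTop.coe_lt_top _)⟩

lemma mem_pt {n d : ℤ} : (Iv.pt n).mem d ↔ d = n := by
  simp only [Iv.mem, Iv.pt, EIntv.ofInt, Bool.false_eq_true, if_false, WithBot.coe_le_coe,
    WithTop.coe_le_coe]
  omega

end Iv

structure DataWord.SparseTail {P : Type} (M : ℕ) (w : DataWord P) : Prop where
  props_eq_empty : ∀ i, 1 ≤ i → (w i).1 = ∅
  gap : ∀ i j, 1 ≤ i → i < j → (M : ℤ) < (w j).2 - (w i).2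

namespace MTL

variable {P : Type}

def toTPTL : MTL P → TPTL P Unit
  | .atom p => .atom p
  | .neg φ => .neg φ.toTPTL
  | .and φ ψ => .and φ.toTPTL ψ.toTPTL
  | .untl φ I ψ => .freeze () (.untl φ.toTPTL (.and ψ.toTPTL (.cstr () I)))

theorem sat_toTPTL (w : DataWord P) (φ : MTL P) (i : ℕ) (ν : Unit → ℕ) :
    TPTL.sat w i ν φ.toTPTL ↔ MTL.sat w i φ := by
  induction φ generalizing i ν with
  | atom p => rfl
  | neg φ ih => exact not_congr (ih i ν)
  | and φ ψ ihφ ihψ => exact and_congr (ihφ i ν) (ihψ i ν)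
  | untl φ I ψ ihφ ihψ =>
    simp only [toTPTL, TPTL.sat, MTL.sat, ihφ, ihψ, Function.update_self]
    exact exists_congr fun j => by tauto

def endpointBound : MTL P → ℕ
  | .atom _ => 0
  | .neg φ => φ.endpointBound
  | .and φ ψ => max φ.endpointBound ψ.endpointBound
  | .untl φ I ψ => max (max φ.endpointBound ψ.endpointBound) (max I.lo.natAbs I.hi.natAbs)

variable {M : ℕ} {w w' : DataWord P}

lemma sat_untl_iff_of_sparseTail (hw : w.SparseTail M) {φ ψ : MTL P} {I : Iv}
    (hlo : I.lo.natAbs ≤ M) (hhi : I.hi.natAbs ≤ M)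
    (hψ : ∀ j, 1 ≤ j → (sat w j ψ ↔ sat w 1 ψ)) {i : ℕ} (hi : 1 ≤ i) :
    sat w i (.untl φ I ψ) ↔ sat w 1 ψ ∧ I.mem (M + 1) := by
  have hmem : ∀ j, i < j → (I.mem ((w j).2 - (w i).2) ↔ I.mem (M + 1)) := fun j hij =>
    Iv.mem_iff_of_far hlo hhi (.inl ⟨hw.gap i j hi hij, by omega⟩)
  constructor
  · rintro ⟨j, hij, hψj, hIj, -⟩
    exact ⟨(hψ j (by omega)).1 hψj, (hmem j hij).1 hIj⟩
  · rintro ⟨hψ1, hI⟩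
    exact ⟨i + 1, by omega, (hψ _ (by omega)).2 hψ1, (hmem _ (by omega)).2 hI,
      fun k hik hki => absurd hki (by omega)⟩

theorem sat_iff_of_sparseTail (hw : w.SparseTail M) (hw' : w'.SparseTail M) (φ : MTL P)
    (hφ : φ.endpointBound ≤ M) {i i' : ℕ} (hi : 1 ≤ i) (hi' : 1 ≤ i') :
    sat w i φ ↔ sat w' i' φ := by
  induction φ generalizing i i' with
  | atom p => simp [sat, hw.props_eq_empty i hi, hw'.props_eq_empty i' hi']
  | neg φ ih => exact not_congr (ih hφ hi hi')
  | and φ ψ ihφ ihψ =>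
    simp only [endpointBound, max_le_iff] at hφ
    exact and_congr (ihφ hφ.1 hi hi') (ihψ hφ.2 hi hi')
  | untl φ I ψ _ ihψ =>
    simp only [endpointBound, max_le_iff] at hφ
    obtain ⟨⟨-, hψ⟩, hlo, hhi⟩ := hφ
    have h11 := ihψ hψ le_rfl le_rfl
    rw [sat_untl_iff_of_sparseTail hw hlo hhi
        (fun j hj => (ihψ hψ hj le_rfl).trans h11.symm) hi,
      sat_untl_iff_of_sparseTail hw' hlo hhi
        (fun j hj => (ihψ hψ le_rfl hj).symm.trans h11) hi', h11]

lemma sat_zero_untl_iff {φ ψ : MTL P} {I : Iv}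
    (hφ : ∀ k, 1 ≤ k → (sat w k φ ↔ sat w 1 φ)) (hψ : ∀ j, 1 ≤ j → (sat w j ψ ↔ sat w 1 ψ)) :
    sat w 0 (.untl φ I ψ) ↔ sat w 1 ψ ∧ (I.mem ((w 1).2 - (w 0).2) ∨
      sat w 1 φ ∧ ∃ j, 2 ≤ j ∧ I.mem ((w j).2 - (w 0).2)) := by
  constructor
  · rintro ⟨j, hj, hψj, hIj, hφk⟩
    refine ⟨(hψ j hj).1 hψj, ?_⟩
    rcases (show j = 1 ∨ 2 ≤ j by omega) with rfl | hj2
    · exact .inl hIj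
    · exact .inr ⟨hφk 1 one_pos hj2, j, hj2, hIj⟩
  · rintro ⟨hψ1, hI1 | ⟨hφ1, j, hj, hIj⟩⟩
    · exact ⟨1, one_pos, hψ1, hI1, fun k hk hk1 => absurd hk1 (by omega)⟩
    · exact ⟨j, by omega, (hψ j (by omega)).2 hψ1, hIj, fun k hk _ => (hφ k hk).2 hφ1⟩

end MTL

def recurringWord (P : Type) (H : ℕ) : DataWord P := fun k => (∅, if k = 0 then 3 * H else k * H)

def nonrecurringWord (P : Type) (H : ℕ) : DataWord P :=
  fun k => (∅, if k = 0 then 3 * H else if k = 1 then H else (k + 1) * H)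

section Witnesses

variable {P : Type}

lemma recurringWord_sub_zero (H : ℕ) {k : ℕ} (hk : 1 ≤ k) :
    ((recurringWord P H k).2 : ℤ) - (recurringWord P H 0).2 = (k - 3) * H := by
  simp only [recurringWord, if_neg (show k ≠ 0 by omega)]
  push_cast
  ring

lemma nonrecurringWord_one_sub_zero (H : ℕ) :
    ((nonrecurringWord P H 1).2 : ℤ) - (nonrecurringWord P H 0).2 = -2 * H := by
  simp only [nonrecurringWord, if_neg one_ne_zero]
  push_cast
  ring

lemma nonrecurringWord_sub_zero (H : ℕ) {k : ℕ} (hk : 2 ≤ k) :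
    ((nonrecurringWord P H k).2 : ℤ) - (nonrecurringWord P H 0).2 = (k - 2) * H := by
  simp only [nonrecurringWord, if_neg (show k ≠ 0 by omega), if_neg (show k ≠ 1 by omega)]
  push_cast
  ring

lemma sparseTail_recurringWord {M H : ℕ} (hMH : M < H) :
    (recurringWord P H).SparseTail M where
  props_eq_empty _ _ := rfl
  gap i j hi hij := by
    rw [← sub_sub_sub_cancel_right _ _ ((recurringWord P H 0).2 : ℤ),
      recurringWord_sub_zero H (hi.trans hij.le), recurringWord_sub_zero H hi]
    have : (i : ℤ) + 1 ≤ j := by exact_mod_cast hij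
    nlinarith

lemma sparseTail_nonrecurringWord {M H : ℕ} (hMH : M < H) :
    (nonrecurringWord P H).SparseTail M where
  props_eq_empty _ _ := rfl
  gap i j hi hij := by
    rw [← sub_sub_sub_cancel_right _ _ ((nonrecurringWord P H 0).2 : ℤ),
      nonrecurringWord_sub_zero H (show 2 ≤ j by omega)]
    have : (i : ℤ) + 1 ≤ j := by exact_mod_cast hij
    rcases (show i = 1 ∨ 2 ≤ i by omega) with rfl | hi2
    · rw [nonrecurringWord_one_sub_zero]
      nlinarith
    · rw [nonrecurringWord_sub_zero H hi2]
      nlinarith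

lemma exists_mem_recurringWord_iff (H : ℕ) (I : Iv) :
    (∃ j, 2 ≤ j ∧ I.mem ((recurringWord P H j).2 - (recurringWord P H 0).2)) ↔
      I.mem (-H) ∨ ∃ j, 2 ≤ j ∧
        I.mem ((nonrecurringWord P H j).2 - (nonrecurringWord P H 0).2) := by
  constructor
  · rintro ⟨j, hj, hI⟩
    rw [recurringWord_sub_zero H (by omega)] at hI
    rcases (show j = 2 ∨ 3 ≤ j by omega) with rfl | hj3
    · left; convert hI using 1; push_cast; ring
    · refine .inr ⟨j - 1, by omega, ?_⟩
      rw [nonrecurringWord_sub_zero H (by omega)]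
      convert hI using 2; push_cast [show 1 ≤ j by omega]; ring
  · rintro (hI | ⟨j, hj, hI⟩)
    · refine ⟨2, le_rfl, ?_⟩
      rw [recurringWord_sub_zero H (by omega)]
      convert hI using 1; push_cast; ring
    · refine ⟨j + 1, by omega, ?_⟩
      rw [recurringWord_sub_zero H (by omega)]
      rw [nonrecurringWord_sub_zero H hj] at hI
      convert hI using 2; push_cast; ring

end Witnesses

namespace MTL

variable {P : Type}

theorem sat_zero_recurringWord_iff {M H : ℕ} (hMH : M < H) (φ : MTL P)
    (hφ : φ.endpointBound ≤ M) :
    sat (recurringWord P H) 0 φ ↔ sat (nonrecurringWord P H) 0 φ := by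
  have hu := sparseTail_recurringWord (P := P) hMH
  have hv := sparseTail_nonrecurringWord (P := P) hMH
  induction φ with
  | atom p => rfl
  | neg φ ih => exact not_congr (ih hφ)
  | and φ ψ ihφ ihψ =>
    simp only [endpointBound, max_le_iff] at hφ
    exact and_congr (ihφ hφ.1) (ihψ hφ.2)
  | untl φ I ψ =>
    simp only [endpointBound, max_le_iff] at hφ
    obtain ⟨⟨hφ, hψ⟩, hlo, hhi⟩ := hφ
    have tail_const {w : DataWord P} (hw : w.SparseTail M) (χ : MTL P) (hχ : χ.endpointBound ≤ M) :
        ∀ k, 1 ≤ k → (sat w k χ ↔ sat w 1 χ) := fun k hk =>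
      sat_iff_of_sparseTail hw hw χ hχ hk le_rfl
    have hH : I.mem (-H) ↔ I.mem (-2 * H) := Iv.mem_iff_of_far hlo hhi (.inr ⟨by omega, by omega⟩)
    rw [sat_zero_untl_iff (tail_const hu φ hφ) (tail_const hu ψ hψ),
      sat_zero_untl_iff (tail_const hv φ hφ) (tail_const hv ψ hψ), exists_mem_recurringWord_iff,
      recurringWord_sub_zero H le_rfl, nonrecurringWord_one_sub_zero,
      sat_iff_of_sparseTail hu hv φ hφ le_rfl le_rfl,
      sat_iff_of_sparseTail hu hv ψ hψ le_rfl le_rfl,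
      show (((1 : ℕ) : ℤ) - 3) * H = -2 * H by push_cast; ring, ← hH]
    tauto

end MTL

namespace TPTL

variable {P V : Type}

-- `P` may be empty, so `true` is the constraint `x ∈ (-∞, ∞)`.
def eventually (x : V) (φ : TPTL P V) : TPTL P V := .untl (.cstr x Iv.univ) φ

lemma sat_eventually [DecidableEq V] {w : DataWord P} {i : ℕ} {ν : V → ℕ} {x : V}
    {φ : TPTL P V} : sat w i ν (eventually x φ) ↔ ∃ j, i < j ∧ sat w j ν φ :=
  exists_congr fun _ => ⟨fun h => ⟨h.1, h.2.1⟩, fun h => ⟨h.1, h.2, fun _ _ _ => Iv.mem_univ _⟩⟩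

def freezeFFFEqZero : TPTL P Unit :=
  .freeze () (eventually () (eventually () (eventually () (.cstr () (Iv.pt 0)))))

lemma models_freezeFFFEqZero_iff {w : DataWord P} :
    models w freezeFFFEqZero ↔ ∃ j, 3 ≤ j ∧ (w j).2 = (w 0).2 := by
  simp only [models, freezeFFFEqZero, sat, sat_eventually, Function.update_self, Iv.mem_pt,
    sub_eq_zero, Nat.cast_inj]
  constructor
  · rintro ⟨j₁, h₁, j₂, h₂, j₃, h₃, h⟩
    exact ⟨j₃, by omega, h⟩
  · rintro ⟨j, hj, h⟩
    exact ⟨1, one_pos, 2, one_lt_two, j, by omega, h⟩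

end TPTL

lemma models_freezeFFFEqZero_recurringWord {P : Type} (H : ℕ) :
    TPTL.models (recurringWord P H) TPTL.freezeFFFEqZero :=
  TPTL.models_freezeFFFEqZero_iff.2 ⟨3, le_rfl, rfl⟩

lemma not_models_freezeFFFEqZero_nonrecurringWord {P : Type} {H : ℕ} (hH : 0 < H) :
    ¬ TPTL.models (nonrecurringWord P H) TPTL.freezeFFFEqZero := by
  rw [TPTL.models_freezeFFFEqZero_iff]
  rintro ⟨j, hj, h⟩
  simp only [nonrecurringWord, if_neg (show j ≠ 0 by omega), if_neg (show j ≠ 1 by omega)] at h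
  have := Nat.eq_of_mul_eq_mul_right hH h
  omega

/-- `TPTL¹` is strictly more expressive than MTL: every MTL formula has an
equivalent one-register TPTL formula, but some one-register TPTL formula has
no equivalent MTL formula. -/
theorem tptl1_strictly_more_expressive_than_mtl (P : Type) :
    (∀ φ : MTL P, ∃ ψ : TPTL P Unit,
        ∀ w : DataWord P, MTL.models w φ ↔ TPTL.models w ψ) ∧
    (∃ ψ : TPTL P Unit,
        ¬ ∃ φ : MTL P, ∀ w : DataWord P, MTL.models w φ ↔ TPTL.models w ψ) := by
  refine ⟨fun φ => ⟨φ.toTPTL, fun w => (φ.sat_toTPTL w 0 _).symm⟩, TPTL.freezeFFFEqZero, ?_⟩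
  rintro ⟨φ, hφ⟩
  have hsame := MTL.sat_zero_recurringWord_iff (lt_add_one _) φ le_rfl
  exact not_models_freezeFFFEqZero_nonrecurringWord (Nat.succ_pos _)
    ((hφ _).1 (hsame.1 ((hφ _).2 (models_freezeFFFEqZero_recurringWord _))))
end

section
/- The MTL formula (¬a) U b is not definable in the unary fragment TPTL^un of TPTL, whose only temporal operators are F and X (no until). -/
/-- Syntax of the unary fragment `TPTL^un`: only the temporal operators `F`
and `X`. -/
inductive TPTLun (P V : Type) where
  | atom : P → TPTLun P V
  | cstr : V → Iv → TPTLun P V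
  | neg : TPTLun P V → TPTLun P V
  | and : TPTLun P V → TPTLun P V → TPTLun P V
  | ev : TPTLun P V → TPTLun P V
  | nxt : TPTLun P V → TPTLun P V
  | freeze : V → TPTLun P V → TPTLun P V

/-- Satisfaction for `TPTL^un`. -/
def TPTLun.sat {P V : Type} [DecidableEq V] (w : DataWord P) :
    ℕ → (V → ℕ) → TPTLun P V → Prop
  | i, _, .atom p => p ∈ (w i).1
  | i, ν, .cstr x I => I.mem (((w i).2 : ℤ) - (ν x : ℤ))
  | i, ν, .neg φ => ¬ TPTLun.sat w i ν φ
  | i, ν, .and φ ψ => TPTLun.sat w i ν φ ∧ TPTLun.sat w i ν ψ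
  | i, ν, .ev φ => ∃ j, i < j ∧ TPTLun.sat w j ν φ
  | i, ν, .nxt φ => TPTLun.sat w (i + 1) ν φ
  | i, ν, .freeze x φ => TPTLun.sat w i (Function.update ν x (w i).2) φ

/-- A data word satisfies a `TPTL^un` formula if it holds at position `0`
under the valuation mapping every register to the first data value. -/
def TPTLun.models {P V : Type} [DecidableEq V] (w : DataWord P) (φ : TPTLun P V) : Prop :=
  TPTLun.sat w 0 (fun _ => (w 0).2) φ

/-- The MTL formula `(¬a) U b`, with `a` the atom `true` and `b` the atom
`false` of `Bool`. -/
def negaUb : MTL Bool := .untl (.neg (.atom true)) Iv.univ (.atom false)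

/-!
Constant data values make registers useless, so a `TPTL^un` formula only sees letters, and
one of `F`/`X`-nesting depth `< g` cannot tell `u = (∅^g a ∅^g b)^ω` from its shift
`v = (∅^g b ∅^g a)^ω` by `g + 1`: in an Ehrenfeucht–Fraïssé game on `u` and `v`, Duplicator
answers a jump `F` by a position of the same phase, i.e. shifted by `± (g + 1)` modulo the
period `2g + 2`, and answers `X` in the common prefix `∅^g` by copying. Yet the first `b` of
`v` comes before any `a`, while every `b` of `u` is preceded by an `a`.
-/

namespace TPTLun

variable {P V : Type}

def depth : TPTLun P V → ℕ
  | .atom _ => 0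
  | .cstr _ _ => 0
  | .neg φ => φ.depth
  | .and φ ψ => max φ.depth ψ.depth
  | .ev φ => φ.depth + 1
  | .nxt φ => φ.depth + 1
  | .freeze _ φ => φ.depth

/-- `R d i j` says that Duplicator wins the `d`-round `F`/`X` game from positions `i` of `w`
and `j` of `w'`. -/
structure DepthBisim (w w' : DataWord P) (R : ℕ → ℕ → ℕ → Prop) : Prop where
  apply_eq : ∀ {d i j}, R d i j → w i = w' j
  next : ∀ {d i j}, R (d + 1) i j → R d (i + 1) (j + 1)
  forth : ∀ {d i j i'}, R (d + 1) i j → i < i' → ∃ j', j < j' ∧ R d i' j'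
  back : ∀ {d i j j'}, R (d + 1) i j → j < j' → ∃ i', i < i' ∧ R d i' j'

theorem DepthBisim.sat_iff [DecidableEq V] {w w' : DataWord P} {R : ℕ → ℕ → ℕ → Prop}
    (hR : DepthBisim w w' R) (φ : TPTLun P V) {d i j : ℕ} (ν : V → ℕ) (hij : R d i j)
    (hφ : φ.depth ≤ d) : sat w i ν φ ↔ sat w' j ν φ := by
  induction φ generalizing d i j ν with
  | atom p => simp only [sat, hR.apply_eq hij]
  | cstr x I => simp only [sat, hR.apply_eq hij]
  | neg φ ih => exact not_congr (ih ν hij hφ)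
  | and φ ψ ihφ ihψ =>
    simp only [depth, max_le_iff] at hφ
    exact and_congr (ihφ ν hij hφ.1) (ihψ ν hij hφ.2)
  | freeze x φ ih =>
    simp only [sat, hR.apply_eq hij]
    exact ih _ hij hφ
  | nxt φ ih =>
    cases d with
    | zero => simp [depth] at hφ
    | succ d => exact ih ν (hR.next hij) (by simpa [depth] using hφ)
  | ev φ ih =>
    cases d with
    | zero => simp [depth] at hφ
    | succ d =>
      have hφ' : φ.depth ≤ d := by simpa [depth] using hφ
      constructor
      · rintro ⟨i', hi', hsat⟩
        obtain ⟨j', hj', hij'⟩ := hR.forth hij hi'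
        exact ⟨j', hj', (ih ν hij' hφ').1 hsat⟩
      · rintro ⟨j', hj', hsat⟩
        obtain ⟨i', hi', hij'⟩ := hR.back hij hj'
        exact ⟨i', hi', (ih ν hij' hφ').2 hsat⟩

/-- Duplicator's strategy: keep the two positions in the same phase of the period `2 * s`, or
equal inside the common prefix of length `n`. -/
def ShiftRel (s n d i j : ℕ) : Prop := i = j + s ∨ j = i + s ∨ (i = j ∧ i + d < n)

theorem depthBisim_shift {w : DataWord P} {s n : ℕ} (hper : ∀ i, w (i + 2 * s) = w i)
    (hpre : ∀ i < n, w i = w (i + s)) :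
    DepthBisim w (fun j => w (j + s)) (ShiftRel s n) where
  apply_eq {d i j} h := by
    rcases h with rfl | rfl | ⟨rfl, h⟩
    · rfl
    · rw [add_assoc, ← two_mul, hper]
    · exact hpre i (by omega)
  next {d i j} h := by unfold ShiftRel at h ⊢; omega
  forth {d i j i'} h hi := by
    rcases h with rfl | rfl | ⟨rfl, -⟩
    · exact ⟨i' - s, by omega, Or.inl (by omega)⟩
    · exact ⟨i' + s, by omega, Or.inr (Or.inl rfl)⟩
    · exact ⟨i' + s, by omega, Or.inr (Or.inl rfl)⟩
  back {d i j j'} h hj := by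
    rcases h with rfl | rfl | ⟨rfl, -⟩
    · exact ⟨j' + s, by omega, Or.inl rfl⟩
    · exact ⟨j' - s, by omega, Or.inr (Or.inl (by omega))⟩
    · exact ⟨j' + s, by omega, Or.inl rfl⟩

theorem models_iff_models_shift [DecidableEq V] {w : DataWord P} {s n : ℕ}
    (hper : ∀ i, w (i + 2 * s) = w i) (hpre : ∀ i < n, w i = w (i + s)) (φ : TPTLun P V)
    (hφ : φ.depth < n) : models w φ ↔ models (fun j => w (j + s)) φ := by
  have hw0 : w s = w 0 := by simpa using (hpre 0 (by omega)).symm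
  simp only [models, zero_add, hw0]
  exact (depthBisim_shift hper hpre).sat_iff φ _ (Or.inr (Or.inr ⟨rfl, by omega⟩)) le_rfl

end TPTLun

theorem Iv.mem_univ_s12 (d : ℤ) : Iv.univ.mem d := by
  simp only [Iv.mem, Iv.univ, EIntv.ofInt, if_true]
  exact ⟨WithBot.bot_lt_coe _, WithBot.coe_lt_coe.2 (WithTop.coe_lt_top d)⟩

namespace NegaUb

def phaseLetter (g r : ℕ) : Set Bool :=
  if r = g then {true} else if r = 2 * g + 1 then {false} else ∅

theorem true_mem_phaseLetter {g r : ℕ} : true ∈ phaseLetter g r ↔ r = g := by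
  unfold phaseLetter; split_ifs <;> simp <;> omega

theorem false_mem_phaseLetter {g r : ℕ} : false ∈ phaseLetter g r ↔ r = 2 * g + 1 := by
  unfold phaseLetter; split_ifs <;> simp <;> omega

/-- The word `(∅^g a ∅^g b)^ω` with constant data `0`, where `a = true` and `b = false`. -/
def alternating (g : ℕ) : DataWord Bool := fun i => (phaseLetter g (i % (2 * (g + 1))), 0)

theorem alternating_add_period (g i : ℕ) :
    alternating g (i + 2 * (g + 1)) = alternating g i := by
  simp only [alternating, Nat.add_mod_right]

theorem alternating_eq_add_of_lt {g i : ℕ} (hi : i < g) :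
    alternating g i = alternating g (i + (g + 1)) := by
  simp only [alternating, Nat.mod_eq_of_lt (by omega : i < 2 * (g + 1)),
    Nat.mod_eq_of_lt (by omega : i + (g + 1) < 2 * (g + 1)), phaseLetter]
  rw [if_neg (by omega), if_neg (by omega), if_neg (by omega), if_neg (by omega)]

theorem not_models_alternating {g : ℕ} (hg : 0 < g) : ¬ MTL.models (alternating g) negaUb := by
  rintro ⟨j, -, hb, -, hnota⟩
  change false ∈ phaseLetter g _ at hb
  rw [false_mem_phaseLetter] at hb
  have hj := Nat.div_add_mod j (2 * (g + 1))
  generalize j / (2 * (g + 1)) = q at hj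
  -- the `a` of the same period as the `b` at `j`
  refine hnota (2 * (g + 1) * q + g) (by omega) (by omega) ?_
  change true ∈ phaseLetter g _
  rw [true_mem_phaseLetter, Nat.mul_add_mod, Nat.mod_eq_of_lt (by omega)]

theorem models_alternating_shift {g : ℕ} (hg : 0 < g) :
    MTL.models (fun j => alternating g (j + (g + 1))) negaUb := by
  refine ⟨g, hg, ?_, Iv.mem_univ_s12 _, fun k hk hkg => ?_⟩
  · change false ∈ phaseLetter g _
    rw [false_mem_phaseLetter, Nat.mod_eq_of_lt (by omega)]
    omega
  · change true ∉ phaseLetter g _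
    rw [true_mem_phaseLetter, Nat.mod_eq_of_lt (by omega)]
    omega

end NegaUb

/-- `(¬a) U b` is not definable in the unary fragment `TPTL^un`. -/
theorem negaUb_not_tptlun_definable :
    ¬ ∃ ψ : TPTLun Bool ℕ,
        ∀ w : DataWord Bool, TPTLun.models w ψ ↔ MTL.models w negaUb := by
  rintro ⟨ψ, hψ⟩
  have hg : 0 < ψ.depth + 1 := Nat.succ_pos _
  have hindist := TPTLun.models_iff_models_shift (NegaUb.alternating_add_period _)
    (fun _ => NegaUb.alternating_eq_add_of_lt) ψ (Nat.lt_succ_self _)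
  exact NegaUb.not_models_alternating hg
    ((hψ _).1 (hindist.2 ((hψ _).2 (NegaUb.models_alternating_shift hg))))
end
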